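/- arXiv:1010.2444 — 2 statements merged into one kernel-verified Lean document; each statement's English description precedes it below -/
import Mathlib

section
/- For every prime ℓ, integer g ≥ 1, and λ ∈ F_ℓ^×, the number of symplectic similitudes of F_ℓ^{2g} with multiplier λ having eigenvalue 1 is at most ℓ^{2g-1}·((ℓ^{2g}-1)/(ℓ-1))·|Sp_{2g-2}(F_ℓ)|. -/
/-!
Count the pairs `(w, A)` with `w ≠ 0`, `A ∈ GSp_{2g}(𝔽_ℓ)[λ]` and `A w = w`. A similitude with
eigenvalue `1` fixes the `ℓ - 1` nonzero multiples of some vector, so it lies in at least `ℓ - 1`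
pairs. Conversely, `Sp_{2g}` acts transitively on nonzero vectors (two symplectic transvections move
`u` to `w`), so conjugating by such a matrix and multiplying by `diag(λ⁻¹, …, λ⁻¹, 1, …, 1)` maps
the pairs with first entry `w` injectively into the stabilizer of `e = e_{inr 0}` in `Sp_{2g}`. A
symplectic `B` with `B e = e` preserves `ω(e, ·)`, which forces its row `inl 0`, makes its
`(2g-2)`-block symplectic, and determines its row `inr 0` from the entry `B_{inr 0, inl 0}`, the
column `inl 0` and that block. Hence the stabilizer has at most `ℓ^{2g-1} |Sp_{2g-2}|` elements.
-/

open Matrix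

/-- The set of symplectic similitudes of `R^{2g}` with multiplier `lam`
(with respect to the canonical symplectic form given by `Matrix.J`). -/
def GSpMul (g : ℕ) (R : Type*) [CommRing R] (lam : R) :
    Set (Matrix (Fin g ⊕ Fin g) (Fin g ⊕ Fin g) R) :=
  {A | IsUnit A ∧ A * Matrix.J (Fin g) R * Aᵀ = lam • Matrix.J (Fin g) R}

namespace Matrix

variable {l R F : Type*} [Fintype l] [DecidableEq l]

section CommRing

variable [CommRing R]

def symplecticForm (x y : l ⊕ l → R) : R := x ⬝ᵥ (J l R *ᵥ y)

theorem symplecticForm_eq_sum (x y : l ⊕ l → R) :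
    symplecticForm x y =
      ∑ i : l, (x (Sum.inr i) * y (Sum.inl i) - x (Sum.inl i) * y (Sum.inr i)) := by
  simp [symplecticForm, J, dotProduct, mulVec, fromBlocks, Fintype.sum_sum_type, one_apply,
    Finset.sum_sub_distrib, neg_add_eq_sub]

theorem symplecticForm_self (x : l ⊕ l → R) : symplecticForm x x = 0 := by
  simp [symplecticForm_eq_sum, mul_comm]

theorem symplecticForm_swap (x y : l ⊕ l → R) : symplecticForm y x = -symplecticForm x y := by
  simp only [symplecticForm_eq_sum, ← Finset.sum_neg_distrib]
  exact Finset.sum_congr rfl fun i _ => by ring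

theorem symplecticForm_add_right (x y z : l ⊕ l → R) :
    symplecticForm x (y + z) = symplecticForm x y + symplecticForm x z := by
  simp [symplecticForm, mulVec_add, dotProduct_add]

theorem symplecticForm_add_left (x y z : l ⊕ l → R) :
    symplecticForm (x + y) z = symplecticForm x z + symplecticForm y z := by
  simp [symplecticForm, add_dotProduct]

theorem symplecticForm_smul_right (x y : l ⊕ l → R) (c : R) :
    symplecticForm x (c • y) = c * symplecticForm x y := by
  simp [symplecticForm, mulVec_smul, dotProduct_smul]

theorem symplecticForm_smul_left (x y : l ⊕ l → R) (c : R) :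
    symplecticForm (c • x) y = c * symplecticForm x y := by
  simp [symplecticForm, smul_dotProduct]

theorem symplecticForm_sub_left (x y z : l ⊕ l → R) :
    symplecticForm (x - y) z = symplecticForm x z - symplecticForm y z := by
  simp [symplecticForm, sub_dotProduct]

theorem symplecticForm_single_single (i j : l ⊕ l) :
    symplecticForm (Pi.single i 1) (Pi.single j 1) = J l R i j := by
  simp [symplecticForm]

theorem symplecticForm_single_inr (i : l) (y : l ⊕ l → R) :
    symplecticForm (Pi.single (Sum.inr i) 1) y = y (Sum.inl i) := by
  simp [symplecticForm_eq_sum, Pi.single_apply]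

theorem symplecticForm_mulVec_mulVec (A : Matrix (l ⊕ l) (l ⊕ l) R) (x y : l ⊕ l → R) :
    symplecticForm (A *ᵥ x) (A *ᵥ y) = x ⬝ᵥ ((Aᵀ * J l R * A) *ᵥ y) := by
  rw [symplecticForm, ← vecMul_transpose, ← dotProduct_mulVec, mulVec_mulVec, mulVec_mulVec]

theorem transpose_mul_J_mul_apply (A : Matrix (l ⊕ l) (l ⊕ l) R) (i j : l ⊕ l) :
    (Aᵀ * J l R * A) i j = symplecticForm (A.col i) (A.col j) := by
  rw [← mulVec_single_one, ← mulVec_single_one, symplecticForm_mulVec_mulVec,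
    mulVec_single_one, single_one_dotProduct, col_apply]

theorem symplecticForm_col_col_of_mem {B : Matrix (l ⊕ l) (l ⊕ l) R}
    (hB : B ∈ symplecticGroup l R) (i j : l ⊕ l) :
    symplecticForm (B.col i) (B.col j) = J l R i j := by
  rw [← transpose_mul_J_mul_apply, SymplecticGroup.mem_iff'.1 hB]

theorem mem_symplecticGroup_iff_symplecticForm {A : Matrix (l ⊕ l) (l ⊕ l) R} :
    A ∈ symplecticGroup l R ↔
      ∀ x y, symplecticForm (A *ᵥ x) (A *ᵥ y) = symplecticForm x y := by
  simp only [SymplecticGroup.mem_iff', symplecticForm_mulVec_mulVec]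
  refine ⟨fun h x y => by rw [h, symplecticForm], fun h => ?_⟩
  ext i j
  simpa [symplecticForm_single_single] using h (Pi.single i 1) (Pi.single j 1)

def symplecticTransvection (v : l ⊕ l → R) (c : R) : Matrix (l ⊕ l) (l ⊕ l) R :=
  1 + c • vecMulVec v (v ᵥ* J l R)

theorem symplecticTransvection_mulVec (v x : l ⊕ l → R) (c : R) :
    symplecticTransvection v c *ᵥ x = x + (c * symplecticForm v x) • v := by
  simp [symplecticTransvection, add_mulVec, smul_mulVec, vecMulVec_mulVec, symplecticForm,
    dotProduct_mulVec, smul_smul]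

theorem symplecticTransvection_mem (v : l ⊕ l → R) (c : R) :
    symplecticTransvection v c ∈ symplecticGroup l R := by
  refine mem_symplecticGroup_iff_symplecticForm.2 fun x y => ?_
  simp only [symplecticTransvection_mulVec, symplecticForm_add_left, symplecticForm_add_right,
    symplecticForm_smul_left, symplecticForm_smul_right, symplecticForm_self,
    symplecticForm_swap x v]
  ring

theorem exists_symplecticForm_ne_zero {w : l ⊕ l → R} (hw : w ≠ 0) :
    ∃ z, symplecticForm w z ≠ 0 := by
  by_contra! h
  refine hw (dotProduct_eq_zero w fun y => ?_)
  simpa [symplecticForm, mulVec_neg, mulVec_mulVec, J_squared, neg_mulVec] using h (-(J l R *ᵥ y))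

theorem exists_symplecticForm_ne_zero_and_ne_zero {u w : l ⊕ l → R} (hu : u ≠ 0) (hw : w ≠ 0) :
    ∃ z, symplecticForm u z ≠ 0 ∧ symplecticForm w z ≠ 0 := by
  obtain ⟨zu, hzu⟩ := exists_symplecticForm_ne_zero hu
  obtain ⟨zw, hzw⟩ := exists_symplecticForm_ne_zero hw
  by_cases hu' : symplecticForm u zw = 0
  · by_cases hw' : symplecticForm w zu = 0
    · exact ⟨zu + zw, by simpa [symplecticForm_add_right, hu'], by
        simpa [symplecticForm_add_right, hw']⟩
    · exact ⟨zu, hzu, hw'⟩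
  · exact ⟨zw, hu', hzw⟩

def IsSymplecticSimilitude (a : R) (A : Matrix (l ⊕ l) (l ⊕ l) R) : Prop :=
  A * J l R * Aᵀ = a • J l R

theorem isSymplecticSimilitude_one_iff {A : Matrix (l ⊕ l) (l ⊕ l) R} :
    IsSymplecticSimilitude 1 A ↔ A ∈ symplecticGroup l R := by
  rw [IsSymplecticSimilitude, one_smul, SymplecticGroup.mem_iff]

theorem IsSymplecticSimilitude.mul {A B : Matrix (l ⊕ l) (l ⊕ l) R} {a b : R}
    (hA : IsSymplecticSimilitude a A) (hB : IsSymplecticSimilitude b B) :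
    IsSymplecticSimilitude (a * b) (A * B) := by
  rw [IsSymplecticSimilitude, transpose_mul, show A * B * J l R * (Bᵀ * Aᵀ) =
    A * (B * J l R * Bᵀ) * Aᵀ by simp only [Matrix.mul_assoc], hB, Matrix.mul_smul,
    Matrix.smul_mul, hA, smul_smul, mul_comm]

def symplecticScaling (a : R) : Matrix (l ⊕ l) (l ⊕ l) R :=
  fromBlocks (a • 1) 0 0 1

theorem isSymplecticSimilitude_symplecticScaling (a : R) :
    IsSymplecticSimilitude a (symplecticScaling (l := l) a) := by
  simp [IsSymplecticSimilitude, symplecticScaling, J, fromBlocks_transpose, fromBlocks_multiply,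
    fromBlocks_smul]

theorem symplecticScaling_mulVec_single_inr (a : R) (i : l) :
    symplecticScaling a *ᵥ Pi.single (Sum.inr i) 1 = Pi.single (Sum.inr i) 1 := by
  ext (j | j) <;> simp [symplecticScaling, Pi.single_apply, one_apply]

def succEmb (n : ℕ) : Fin n ⊕ Fin n → Fin (n + 1) ⊕ Fin (n + 1) :=
  Sum.map Fin.succ Fin.succ

theorem eq_inl_zero_or_eq_inr_zero_or_exists_succEmb {n : ℕ} (i : Fin (n + 1) ⊕ Fin (n + 1)) :
    i = Sum.inl 0 ∨ i = Sum.inr 0 ∨ ∃ p, i = succEmb n p := by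
  rcases i with i | i <;> induction i using Fin.cases <;> simp [succEmb]

theorem symplecticForm_succ {n : ℕ} (x y : Fin (n + 1) ⊕ Fin (n + 1) → R) :
    symplecticForm x y = x (Sum.inr 0) * y (Sum.inl 0) - x (Sum.inl 0) * y (Sum.inr 0) +
      symplecticForm (x ∘ succEmb n) (y ∘ succEmb n) := by
  simp [symplecticForm_eq_sum, Fin.sum_univ_succ, succEmb, add_sub_add_comm]

theorem J_succEmb_succEmb {n : ℕ} (p q : Fin n ⊕ Fin n) :
    J (Fin (n + 1)) R (succEmb n p) (succEmb n q) = J (Fin n) R p q := by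
  rcases p with p | p <;> rcases q with q | q <;> simp [J, succEmb, one_apply]

theorem J_inr_zero_succEmb {n : ℕ} (p : Fin n ⊕ Fin n) :
    J (Fin (n + 1)) R (Sum.inr 0) (succEmb n p) = 0 := by
  rcases p with p | p <;> simp [J, succEmb, (Fin.succ_ne_zero p).symm]

theorem J_succEmb_inl_zero {n : ℕ} (p : Fin n ⊕ Fin n) :
    J (Fin (n + 1)) R (succEmb n p) (Sum.inl 0) = 0 := by
  rcases p with p | p <;> simp [J, succEmb, Fin.succ_ne_zero p]

theorem J_inr_zero_inl_zero {n : ℕ} : J (Fin (n + 1)) R (Sum.inr 0) (Sum.inl 0) = 1 := by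
  simp [J]

def symplecticStabilizer (v : l ⊕ l → R) : Set (Matrix (l ⊕ l) (l ⊕ l) R) :=
  {B | B ∈ symplecticGroup l R ∧ B *ᵥ v = v}

section Stabilizer

variable {n : ℕ} {B B' : Matrix (Fin (n + 1) ⊕ Fin (n + 1)) (Fin (n + 1) ⊕ Fin (n + 1)) R}

theorem apply_inl_zero_of_mem_symplecticStabilizer
    (hB : B ∈ symplecticStabilizer (Pi.single (Sum.inr 0) 1))
    (j : Fin (n + 1) ⊕ Fin (n + 1)) :
    B (Sum.inl 0) j = J (Fin (n + 1)) R (Sum.inr 0) j := by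
  rw [← symplecticForm_col_col_of_mem hB.1, ← mulVec_single_one, hB.2, symplecticForm_single_inr,
    col_apply]

theorem submatrix_succEmb_mem_of_mem_symplecticStabilizer
    (hB : B ∈ symplecticStabilizer (Pi.single (Sum.inr 0) 1)) :
    B.submatrix (succEmb n) (succEmb n) ∈ symplecticGroup (Fin n) R := by
  rw [SymplecticGroup.mem_iff']
  ext p q
  have h := symplecticForm_col_col_of_mem hB.1 (succEmb n p) (succEmb n q)
  rw [symplecticForm_succ] at h
  simp only [col_apply, apply_inl_zero_of_mem_symplecticStabilizer hB, J_inr_zero_succEmb,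
    mul_zero, zero_mul, sub_self, zero_add, J_succEmb_succEmb] at h
  rwa [transpose_mul_J_mul_apply]

theorem apply_inr_zero_succEmb_of_mem_symplecticStabilizer
    (hB : B ∈ symplecticStabilizer (Pi.single (Sum.inr 0) 1))
    (p : Fin n ⊕ Fin n) :
    B (Sum.inr 0) (succEmb n p) =
      -symplecticForm (B.col (succEmb n p) ∘ succEmb n) (B.col (Sum.inl 0) ∘ succEmb n) := by
  have h := symplecticForm_col_col_of_mem hB.1 (succEmb n p) (Sum.inl 0)
  rw [symplecticForm_succ] at h
  simp only [col_apply, apply_inl_zero_of_mem_symplecticStabilizer hB, J_inr_zero_inl_zero,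
    mul_one, J_inr_zero_succEmb, zero_mul, sub_zero, J_succEmb_inl_zero] at h
  exact eq_neg_of_add_eq_zero_left h

theorem eq_of_mem_symplecticStabilizer (hB : B ∈ symplecticStabilizer (Pi.single (Sum.inr 0) 1))
    (hB' : B' ∈ symplecticStabilizer (Pi.single (Sum.inr 0) 1))
    (h₀ : B (Sum.inr 0) (Sum.inl 0) = B' (Sum.inr 0) (Sum.inl 0))
    (hcol : ∀ p, B (succEmb n p) (Sum.inl 0) = B' (succEmb n p) (Sum.inl 0))
    (hsub : B.submatrix (succEmb n) (succEmb n) = B'.submatrix (succEmb n) (succEmb n)) :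
    B = B' := by
  have hfix (i) : B i (Sum.inr 0) = B' i (Sum.inr 0) := by
    simpa only [mulVec_single_one, col_apply] using congrFun (hB.2.trans hB'.2.symm) i
  have hsub' (p q) : B (succEmb n p) (succEmb n q) = B' (succEmb n p) (succEmb n q) :=
    congrFun (congrFun hsub p) q
  ext i j
  rcases eq_inl_zero_or_eq_inr_zero_or_exists_succEmb i with rfl | rfl | ⟨p, rfl⟩
  · rw [apply_inl_zero_of_mem_symplecticStabilizer hB,
      apply_inl_zero_of_mem_symplecticStabilizer hB']
  all_goals rcases eq_inl_zero_or_eq_inr_zero_or_exists_succEmb j with rfl | rfl | ⟨q, rfl⟩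
  · exact h₀
  · exact hfix _
  · rw [apply_inr_zero_succEmb_of_mem_symplecticStabilizer hB,
      apply_inr_zero_succEmb_of_mem_symplecticStabilizer hB']
    congr 2
    · exact funext fun p => hsub' p q
    · exact funext hcol
  · exact hcol p
  · exact hfix _
  · exact hsub' p q

end Stabilizer

theorem card_symplecticStabilizer_le [Finite R] (n : ℕ) :
    Nat.card (symplecticStabilizer (Pi.single (Sum.inr (0 : Fin (n + 1))) (1 : R))) ≤
      Nat.card R ^ (2 * n + 1) * Nat.card (symplecticGroup (Fin n) R) := by
  let data : symplecticStabilizer (Pi.single (Sum.inr (0 : Fin (n + 1))) (1 : R)) →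
      R × (Fin n ⊕ Fin n → R) × symplecticGroup (Fin n) R := fun B =>
    (B.1 (Sum.inr 0) (Sum.inl 0), fun p => B.1 (succEmb n p) (Sum.inl 0),
      ⟨_, submatrix_succEmb_mem_of_mem_symplecticStabilizer B.2⟩)
  have hdata : Function.Injective data := fun B B' h => by
    simp only [data, Prod.mk.injEq, Subtype.mk.injEq] at h
    exact Subtype.ext (eq_of_mem_symplecticStabilizer B.2 B'.2 h.1 (congrFun h.2.1) h.2.2)
  calc _ ≤ _ := Nat.card_le_card_of_injective data hdata
    _ = _ := by
      simp only [Nat.card_prod, Nat.card_fun, Nat.card_eq_fintype_card, Fintype.card_sum,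
        Fintype.card_fin]
      ring

def fixedPairs {ι : Type*} [Fintype ι] (X : Matrix ι ι R → Prop) :
    Set ((ι → R) × Matrix ι ι R) :=
  {p | p.1 ≠ 0 ∧ X p.2 ∧ p.2 *ᵥ p.1 = p.1}

end CommRing

section Field

variable [Field F]

theorem exists_mem_symplecticGroup_mulVec_eq_of_symplecticForm_ne_zero {x y : l ⊕ l → F}
    (h : symplecticForm x y ≠ 0) : ∃ P ∈ symplecticGroup l F, P *ᵥ x = y := by
  have hyx : symplecticForm (y - x) x ≠ 0 := by
    rwa [symplecticForm_sub_left, symplecticForm_self, sub_zero, symplecticForm_swap, neg_ne_zero]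
  refine ⟨symplecticTransvection (y - x) (symplecticForm (y - x) x)⁻¹,
    symplecticTransvection_mem _ _, ?_⟩
  rw [symplecticTransvection_mulVec, inv_mul_cancel₀ hyx, one_smul, add_sub_cancel]

theorem exists_mem_symplecticGroup_mulVec_eq {u w : l ⊕ l → F} (hu : u ≠ 0) (hw : w ≠ 0) :
    ∃ P ∈ symplecticGroup l F, P *ᵥ u = w := by
  obtain ⟨z, huz, hwz⟩ := exists_symplecticForm_ne_zero_and_ne_zero hu hw
  obtain ⟨P, hP, hPu⟩ := exists_mem_symplecticGroup_mulVec_eq_of_symplecticForm_ne_zero huz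
  obtain ⟨Q, hQ, hQz⟩ := exists_mem_symplecticGroup_mulVec_eq_of_symplecticForm_ne_zero
    (show symplecticForm z w ≠ 0 by rwa [symplecticForm_swap, neg_ne_zero])
  exact ⟨Q * P, mul_mem hQ hP, by rw [← mulVec_mulVec, hPu, hQz]⟩

theorem symplecticScaling_inv_mul_cancel {a : F} (ha : a ≠ 0) :
    symplecticScaling (l := l) a⁻¹ * symplecticScaling a = 1 := by
  simp [symplecticScaling, fromBlocks_multiply, smul_smul, ha, fromBlocks_one]

theorem conj_mul_symplecticScaling_mem {lam : F} (hlam : lam ≠ 0)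
    {P A : Matrix (l ⊕ l) (l ⊕ l) F} (hP : P ∈ symplecticGroup l F)
    (hA : IsSymplecticSimilitude lam A) :
    P⁻¹ * A * P * symplecticScaling lam⁻¹ ∈ symplecticGroup l F := by
  have hP' : P⁻¹ ∈ symplecticGroup l F :=
    SymplecticGroup.coe_inv' ⟨P, hP⟩ ▸ (⟨P, hP⟩⁻¹ : symplecticGroup l F).2
  have := (((isSymplecticSimilitude_one_iff.2 hP').mul hA).mul
    (isSymplecticSimilitude_one_iff.2 hP)).mul (isSymplecticSimilitude_symplecticScaling lam⁻¹)
  rwa [one_mul, mul_one, mul_inv_cancel₀ hlam, isSymplecticSimilitude_one_iff] at this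

theorem conj_mul_symplecticScaling_injective {lam : F} (hlam : lam ≠ 0)
    {P : Matrix (l ⊕ l) (l ⊕ l) F} (hP : P ∈ symplecticGroup l F) :
    Function.Injective fun A => P⁻¹ * A * P * symplecticScaling lam⁻¹ := fun A A' h => by
  have hPu := (isUnit_iff_isUnit_det P).2 (SymplecticGroup.symplectic_det hP)
  have hD := IsUnit.of_mul_eq_one _ (symplecticScaling_inv_mul_cancel (l := l) hlam)
  exact (isUnit_nonsing_inv_iff.2 hPu).mul_left_cancel
    (hPu.mul_right_cancel (hD.mul_right_cancel h))

section Counting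

variable [Finite F]

theorem card_units_mul_card_le_card_fixedPairs {ι : Type*} [Fintype ι]
    (X : Matrix ι ι F → Prop) :
    Nat.card Fˣ * Nat.card {A // X A ∧ ∃ w ≠ 0, A *ᵥ w = w} ≤ Nat.card (fixedPairs X) := by
  choose w hw0 hw using fun A : {A // X A ∧ ∃ w ≠ 0, A *ᵥ w = w} => A.2.2
  let f : Fˣ × {A // X A ∧ ∃ w ≠ 0, A *ᵥ w = w} → fixedPairs X := fun cA =>
    ⟨((cA.1 : F) • w cA.2, cA.2.1), smul_ne_zero cA.1.ne_zero (hw0 _), cA.2.2.1,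
      by rw [mulVec_smul, hw]⟩
  have hf : Function.Injective f := by
    rintro ⟨c, A⟩ ⟨c', A'⟩ h
    simp only [f, Subtype.ext_iff, Prod.mk.injEq] at h
    obtain rfl : A = A' := Subtype.ext h.2
    exact Prod.ext (Units.ext (smul_left_injective F (hw0 A) h.1)) rfl
  exact (Nat.card_prod _ _).symm.le.trans (Nat.card_le_card_of_injective f hf)

theorem card_fixedPairs_le {lam : F} (hlam : lam ≠ 0) (X : Matrix (l ⊕ l) (l ⊕ l) F → Prop)
    (hX : ∀ A, X A → IsSymplecticSimilitude lam A) (i : l) :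
    Nat.card (fixedPairs X) ≤ Nat.card {w : l ⊕ l → F // w ≠ 0} *
      Nat.card (symplecticStabilizer (Pi.single (Sum.inr i) (1 : F))) := by
  set e : l ⊕ l → F := Pi.single (Sum.inr i) 1
  have hP (w : {w : l ⊕ l → F // w ≠ 0}) := exists_mem_symplecticGroup_mulVec_eq (u := e)
    (by simp [e]) w.2
  choose P hP hPe using hP
  have fix (w) (A : Matrix (l ⊕ l) (l ⊕ l) F) (hAw : A *ᵥ w.1 = w.1) :
      ((P w)⁻¹ * A * P w * symplecticScaling lam⁻¹) *ᵥ e = e := by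
    rw [← mulVec_mulVec, symplecticScaling_mulVec_single_inr, ← mulVec_mulVec, hPe,
      ← mulVec_mulVec, hAw, ← hPe w, mulVec_mulVec,
      nonsing_inv_mul _ (SymplecticGroup.symplectic_det (hP w)), one_mulVec]
  let f : fixedPairs X →
      {w : l ⊕ l → F // w ≠ 0} × symplecticStabilizer e := fun p =>
    (⟨p.1.1, p.2.1⟩, ⟨_, conj_mul_symplecticScaling_mem hlam (hP _) (hX _ p.2.2.1),
      fix ⟨p.1.1, p.2.1⟩ p.1.2 p.2.2.2⟩)
  have hf : Function.Injective f := by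
    rintro ⟨⟨w, A⟩, hw, hA⟩ ⟨⟨w', A'⟩, hw', hA'⟩ h
    simp only [f, Prod.mk.injEq, Subtype.ext_iff] at h
    obtain ⟨rfl, h⟩ := h
    exact Subtype.ext (Prod.ext rfl (conj_mul_symplecticScaling_injective hlam (hP _) h))
  exact (Nat.card_le_card_of_injective f hf).trans (Nat.card_prod _ _).le

end Counting

end Field

end Matrix

/-- For every prime `ℓ`, every `g ≥ 1` (here `g+1` plays the role of `g`) and every
`λ ∈ F_ℓ^×`, the number of symplectic similitudes of `F_ℓ^{2g}` with multiplier `λ`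
having eigenvalue `1` (i.e. fixing some nonzero vector) is at most
`ℓ^{2g-1} · ((ℓ^{2g}-1)/(ℓ-1)) · |Sp_{2g-2}(F_ℓ)|` (the division is exact). -/
theorem card_similitudes_with_eigenvalue_one_le (ℓ : ℕ) (hℓ : ℓ.Prime) (g : ℕ)
    (lam : ZMod ℓ) (hlam : lam ≠ 0) :
    Nat.card {A : Matrix (Fin (g + 1) ⊕ Fin (g + 1)) (Fin (g + 1) ⊕ Fin (g + 1)) (ZMod ℓ) //
        A ∈ GSpMul (g + 1) (ZMod ℓ) lam ∧ ∃ w ≠ 0, A *ᵥ w = w} ≤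
      ℓ ^ (2 * (g + 1) - 1) * ((ℓ ^ (2 * (g + 1)) - 1) / (ℓ - 1)) *
        Nat.card (Matrix.symplecticGroup (Fin g) (ZMod ℓ)) := by
  have : Fact ℓ.Prime := ⟨hℓ⟩
  have hunits : Nat.card (ZMod ℓ)ˣ = ℓ - 1 := by
    rw [Nat.card_eq_fintype_card, ZMod.card_units]
  have hnonzero :
      Nat.card {w : Fin (g + 1) ⊕ Fin (g + 1) → ZMod ℓ // w ≠ 0} = ℓ ^ (2 * (g + 1)) - 1 := by
    rw [Nat.card_eq_fintype_card, Fintype.card_subtype_compl, Fintype.card_subtype_eq,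
      ← Nat.card_eq_fintype_card, Nat.card_fun]
    simp [two_mul]
  obtain ⟨m, hm⟩ : ℓ - 1 ∣ ℓ ^ (2 * (g + 1)) - 1 := by
    simpa using Nat.sub_dvd_pow_sub_pow ℓ 1 (2 * (g + 1))
  have hℓ1 : 0 < ℓ - 1 := by have := hℓ.two_le; omega
  rw [hm, Nat.mul_div_cancel_left _ hℓ1, show 2 * (g + 1) - 1 = 2 * g + 1 by omega]
  refine Nat.le_of_mul_le_mul_left ?_ hℓ1
  calc (ℓ - 1) * _
      ≤ Nat.card (fixedPairs (· ∈ GSpMul (g + 1) (ZMod ℓ) lam)) :=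
        hunits ▸ card_units_mul_card_le_card_fixedPairs _
    _ ≤ (ℓ ^ (2 * (g + 1)) - 1) * _ :=
        hnonzero ▸ card_fixedPairs_le hlam _ (fun _ (hA : _ ∈ GSpMul _ _ _) => hA.2) 0
    _ ≤ (ℓ ^ (2 * (g + 1)) - 1) * (ℓ ^ (2 * g + 1) *
          Nat.card (symplecticGroup (Fin g) (ZMod ℓ))) := by
        gcongr
        simpa using card_symplecticStabilizer_le (R := ZMod ℓ) g
    _ = _ := by rw [hm]; ring
end

section
/- Every matrix A ∈ S_λ(ℓ)₀ has fixed space exactly the line F_ℓ·e_1, i.e., the set of vectors v with Av = v is the cyclic subgroup generated by e_1. -/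
open Matrix

/-- The Gram matrix of the standard symplectic form in the basis `e_1, …, e_{2g}`:
block-diagonal with `g` blocks `((0,1),(-1,0))`. -/
def Jblock (g : ℕ) (R : Type*) [CommRing R] : Matrix (Fin (2 * g)) (Fin (2 * g)) R :=
  Matrix.of fun i j =>
    if (i : ℕ) % 2 = 0 ∧ (j : ℕ) = (i : ℕ) + 1 then 1
    else if (i : ℕ) % 2 = 1 ∧ (j : ℕ) + 1 = (i : ℕ) then -1
    else 0

/-- The inclusion `{3, …, 2g} ↪ {1, …, 2g}` of indices (0-based: `i ↦ i + 2`). -/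
def shift (g : ℕ) (i : Fin (2 * g - 2)) : Fin (2 * g) := ⟨(i : ℕ) + 2, by omega⟩

/-! Write `v = (v₁, v₂, w)` with `w = (v₃, …, v_{2g})`. As `A e₁ = e₁`, the last `2g - 2`
coordinates of `A v = v` say `(1 - B) w = v₂ (d_j)_j`, so `w = v₂ (1 - B)⁻¹ (d_j)_j`.
Substituting this into the first coordinate gives `v₂ (d + b ⬝ (1 - B)⁻¹ (d_j)_j) = 0`,
so the condition on `d` forces `v₂ = 0`, hence `w = 0` and `v ∈ F e₁`. -/

section

variable {g : ℕ} {i₀ i₁ : Fin (2 * g)}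

lemma Fin.sum_two_mul_eq_add_add_sum_shift {M : Type*} [AddCommMonoid M]
    (h₀ : (i₀ : ℕ) = 0) (h₁ : (i₁ : ℕ) = 1) (f : Fin (2 * g) → M) :
    ∑ j, f j = f i₀ + f i₁ + ∑ k, f (shift g k) := by
  have hlen : 2 * g - 2 + 2 = 2 * g := by omega
  rw [← Fintype.sum_equiv (finCongr hlen) (fun j => f (finCongr hlen j)) f (fun _ => rfl),
    Fin.sum_univ_succ, Fin.sum_univ_succ, ← add_assoc]
  congr 2 <;> congr 1 <;> ext <;> simp [h₀, h₁]

lemma Fin.eq_or_eq_or_exists_eq_shift (h₀ : (i₀ : ℕ) = 0) (h₁ : (i₁ : ℕ) = 1)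
    (j : Fin (2 * g)) : j = i₀ ∨ j = i₁ ∨ ∃ k, j = shift g k := by
  rcases Nat.lt_or_ge j 2 with hj | hj
  · exact (by omega : (j : ℕ) = 0 ∨ (j : ℕ) = 1).imp (fun h => Fin.ext (h.trans h₀.symm))
      (fun h => Or.inl (Fin.ext (h.trans h₁.symm)))
  · exact Or.inr (Or.inr ⟨⟨j - 2, by omega⟩, Fin.ext (by simp [shift]; omega)⟩)

lemma shift_ne_of_val_eq_zero (h₀ : (i₀ : ℕ) = 0) (k : Fin (2 * g - 2)) : shift g k ≠ i₀ := by
  simp [shift, Fin.ext_iff, h₀]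

namespace Matrix

lemma isUnit_one_sub_of_forall_mulVec_ne {n K : Type*} [Fintype n] [DecidableEq n] [Field K]
    {B : Matrix n n K} (hB : ∀ v, v ≠ 0 → B *ᵥ v ≠ v) : IsUnit (1 - B) := by
  suffices Function.Injective (1 - B).mulVecLin from mulVec_injective_iff_isUnit.mp this
  refine LinearMap.ker_eq_bot.mp <| ker_mulVecLin_eq_bot_iff.mpr fun v hv => ?_
  rw [sub_mulVec, one_mulVec, sub_eq_zero] at hv
  by_contra hv₀
  exact hB v hv₀ hv.symm

lemma mulVec_apply_eq_add_add_dotProduct_shift {R : Type*} [CommRing R] (h₀ : (i₀ : ℕ) = 0)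
    (h₁ : (i₁ : ℕ) = 1) (A : Matrix (Fin (2 * g)) (Fin (2 * g)) R) (v : Fin (2 * g) → R)
    (i : Fin (2 * g)) :
    (A *ᵥ v) i =
      A i i₀ * v i₀ + A i i₁ * v i₁ + (fun k => A i (shift g k)) ⬝ᵥ (v ∘ shift g) :=
  Fin.sum_two_mul_eq_add_add_sum_shift h₀ h₁ _

variable {R : Type*} [CommRing R] {A : Matrix (Fin (2 * g)) (Fin (2 * g)) R}
  {v : Fin (2 * g) → R}

lemma apply_eq_single_of_mulVec_single_eq (hfix : A *ᵥ Pi.single i₀ 1 = Pi.single i₀ 1)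
    (i : Fin (2 * g)) : A i i₀ = (Pi.single i₀ 1 : Fin (2 * g) → R) i := by
  simpa [mulVec_single_one] using congrFun hfix i

lemma one_sub_submatrix_shift_mulVec_of_mulVec_eq_self (h₀ : (i₀ : ℕ) = 0)
    (h₁ : (i₁ : ℕ) = 1) (hfix : A *ᵥ Pi.single i₀ 1 = Pi.single i₀ 1) (hv : A *ᵥ v = v) :
    (1 - A.submatrix (shift g) (shift g)) *ᵥ (v ∘ shift g) =
      v i₁ • fun k => A (shift g k) i₁ := by
  ext k
  have hk := congrFun hv (shift g k)
  rw [mulVec_apply_eq_add_add_dotProduct_shift h₀ h₁,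
    apply_eq_single_of_mulVec_single_eq hfix,
    Pi.single_eq_of_ne (shift_ne_of_val_eq_zero h₀ k)] at hk
  simp only [sub_mulVec, one_mulVec, Pi.sub_apply, Pi.smul_apply, smul_eq_mul,
    Function.comp_apply]
  change _ - (fun k' => A (shift g k) (shift g k')) ⬝ᵥ (v ∘ shift g) = _
  linear_combination -hk

lemma add_dotProduct_shift_eq_zero_of_mulVec_eq_self (h₀ : (i₀ : ℕ) = 0)
    (h₁ : (i₁ : ℕ) = 1) (hfix : A *ᵥ Pi.single i₀ 1 = Pi.single i₀ 1) (hv : A *ᵥ v = v) :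
    A i₀ i₁ * v i₁ + (fun k => A i₀ (shift g k)) ⬝ᵥ (v ∘ shift g) = 0 := by
  have h := congrFun hv i₀
  rw [mulVec_apply_eq_add_add_dotProduct_shift h₀ h₁,
    apply_eq_single_of_mulVec_single_eq hfix, Pi.single_eq_same] at h
  linear_combination h

lemma eq_smul_single_of_mulVec_eq_self {K : Type*} [Field K]
    {A : Matrix (Fin (2 * g)) (Fin (2 * g)) K} {v : Fin (2 * g) → K}
    (h₀ : (i₀ : ℕ) = 0) (h₁ : (i₁ : ℕ) = 1) (hfix : A *ᵥ Pi.single i₀ 1 = Pi.single i₀ 1)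
    (hB : IsUnit (1 - A.submatrix (shift g) (shift g)))
    (hd : A i₀ i₁ ≠
      -((fun k => A i₀ (shift g k)) ⬝ᵥ
        ((1 - A.submatrix (shift g) (shift g))⁻¹ *ᵥ fun k => A (shift g k) i₁)))
    (hv : A *ᵥ v = v) :
    v = v i₀ • Pi.single i₀ 1 := by
  set B := A.submatrix (shift g) (shift g)
  set x := (1 - B)⁻¹ *ᵥ fun k => A (shift g k) i₁
  have hw : v ∘ shift g = v i₁ • x :=
    calc v ∘ shift g = (1 - B)⁻¹ *ᵥ ((1 - B) *ᵥ (v ∘ shift g)) := by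
          rw [mulVec_mulVec, nonsing_inv_mul _ ((isUnit_iff_isUnit_det _).mp hB), one_mulVec]
      _ = v i₁ • x := by
          rw [one_sub_submatrix_shift_mulVec_of_mulVec_eq_self h₀ h₁ hfix hv, mulVec_smul]
  have hv₁ : v i₁ = 0 := by
    have h := add_dotProduct_shift_eq_zero_of_mulVec_eq_self h₀ h₁ hfix hv
    rw [hw, dotProduct_smul, smul_eq_mul] at h
    refine (mul_eq_zero.mp (?_ : v i₁ * (A i₀ i₁ + _ ⬝ᵥ x) = 0)).resolve_right
      fun h' => hd (eq_neg_of_add_eq_zero_left h')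
    linear_combination h
  ext j
  rcases Fin.eq_or_eq_or_exists_eq_shift h₀ h₁ j with rfl | rfl | ⟨k, rfl⟩
  · simp
  · simp [hv₁, (Fin.ne_of_val_ne (by omega) : j ≠ i₀)]
  · simpa [shift_ne_of_val_eq_zero h₀ k, hv₁] using congrFun hw k

end Matrix

end

/-- Every matrix `A ∈ S_λ(ℓ)₀` has fixed space exactly the line `F_ℓ·e_1`:
`A` is a symplectic similitude with multiplier `λ` fixing `e_1`, whose lower-right
`(2g-2)×(2g-2)` block `B` has no eigenvalue `1`, and whose entry
`d = A_{1,2}` avoids the single value `−(b_1,…,b_{2g-2})(Id−B)^{-1}(d_1,…,d_{2g-2})^t`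
(where `b_k = A_{1,k+2}` and `d_j = A_{j+2,2}`).  Then `{v | Av = v} = F_ℓ·e_1`. -/
theorem fixed_space_eq_line (ℓ : ℕ) (hℓ : ℓ.Prime) (g : ℕ) (hg : 2 ≤ g)
    (A : Matrix (Fin (2 * g)) (Fin (2 * g)) (ZMod ℓ))
    (hfix : A *ᵥ Pi.single (⟨0, by omega⟩ : Fin (2 * g)) 1 =
      Pi.single (⟨0, by omega⟩ : Fin (2 * g)) 1)
    (B : Matrix (Fin (2 * g - 2)) (Fin (2 * g - 2)) (ZMod ℓ))
    (hBdef : B = Matrix.of fun i j => A (shift g i) (shift g j))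
    (hB : ∀ v : Fin (2 * g - 2) → ZMod ℓ, v ≠ 0 → B *ᵥ v ≠ v)
    (hd : A (⟨0, by omega⟩ : Fin (2 * g)) (⟨1, by omega⟩ : Fin (2 * g)) ≠
      -((fun j => A (⟨0, by omega⟩ : Fin (2 * g)) (shift g j)) ⬝ᵥ
        ((1 - B)⁻¹ *ᵥ fun j => A (shift g j) (⟨1, by omega⟩ : Fin (2 * g))))) :
    {v : Fin (2 * g) → ZMod ℓ | A *ᵥ v = v} =
      Set.range (fun c : ZMod ℓ =>
        c • (Pi.single (⟨0, by omega⟩ : Fin (2 * g)) 1 : Fin (2 * g) → ZMod ℓ)) := by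
  have : Fact ℓ.Prime := ⟨hℓ⟩
  subst hBdef
  ext v
  refine ⟨fun hv => ⟨_, (eq_smul_single_of_mulVec_eq_self rfl rfl hfix
    (isUnit_one_sub_of_forall_mulVec_ne hB) hd hv).symm⟩, ?_⟩
  rintro ⟨c, rfl⟩
  rw [Set.mem_ofPred_eq, mulVec_smul, hfix]
end
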